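/- Let G be a finite graph with vertex weights in a commutative monoid S and edge weights γ. Then the V-polynomial admits the connected-partition expansion V(G) = Σ_{π ∈ P(G)} x(π) · ∏_{H ∈ C(π)} [q^1] Z_T(H; q, γ), where P(G) is the set of partitions of V(G) into blocks each inducing a connected subgraph, C(π) is the set of induced subgraphs on the blocks of π, x(π) = ∏_i x_{c_i} with c_i the sum of vertex weights in the i-th block, and [q^1] extracts the coefficient of q^1 in the multivariate Tutte polynomial Z_T(H;q,γ) = Σ_{A⊆E(H)} q^{k(A)} ∏_{e∈A} γ_e. -/

import Mathlib

open scoped Classical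
open Finset

structure MGraph (V E : Type) where
  ends : E → Sym2 V

namespace MGraph

variable {V E S R : Type} [Fintype V] [Fintype E]

/-- Two vertices are joined by an edge of `A`. -/
def adjRel (G : MGraph V E) (A : Finset E) (u v : V) : Prop :=
  ∃ e ∈ A, G.ends e = s(u, v)

/-- The setoid on vertices whose classes are the connected components of the
spanning subgraph `(V, A)`. -/
def compSetoid (G : MGraph V E) (A : Finset E) : Setoid V :=
  ⟨Relation.EqvGen (G.adjRel A), Relation.EqvGen.is_equivalence _⟩

/-- The connected components of the spanning subgraph `(V, A)`. -/
def Comp (G : MGraph V E) (A : Finset E) : Type := Quotient (G.compSetoid A)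

noncomputable instance (G : MGraph V E) (A : Finset E) : Fintype (G.Comp A) :=
  @Quotient.fintype V _ (G.compSetoid A) (Classical.decRel _)

/-- `k(A)`: the number of connected components of the spanning subgraph `(V, A)`. -/
noncomputable def kA (G : MGraph V E) (A : Finset E) : ℕ := Nat.card (G.Comp A)

/-- `u` and `v` are connected in the spanning subgraph `(V, A)`. -/
def Connects (G : MGraph V E) (A : Finset E) (u v : V) : Prop :=
  Relation.EqvGen (G.adjRel A) u v

/-- The endpoints of `e` are connected in the spanning subgraph `(V, A)`. -/
def EndsConnected (G : MGraph V E) (A : Finset E) (e : E) : Prop :=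
  ∃ u v, G.ends e = s(u, v) ∧ G.Connects A u v

def IsLoop (G : MGraph V E) (e : E) : Prop := (G.ends e).IsDiag

/-- `(V, A)` is a forest (acyclic spanning subgraph): every edge of `A` is a bridge of it. -/
def IsForest (G : MGraph V E) (A : Finset E) : Prop :=
  ∀ e ∈ A, ¬ G.EndsConnected (A.erase e) e

/-- All vertices are pairwise connected using edges of `A`. -/
def ConnectsAll (G : MGraph V E) (A : Finset E) : Prop := ∀ u v, G.Connects A u v

/-- A maximal spanning forest: a forest restricting to a spanning tree of each
connected component of `G`. -/
def IsSpanningTree (G : MGraph V E) (T : Finset E) : Prop :=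
  G.IsForest T ∧ ∀ u v, G.Connects T u v ↔ G.Connects Finset.univ u v

/-- `e ∈ T` is internally active: `e` is minimal in the cut
`{f : (T - e) ∪ {f} ∈ 𝒯(G)}`. -/
def IntActive [LinearOrder E] (G : MGraph V E) (T : Finset E) (e : E) : Prop :=
  e ∈ T ∧ ∀ f, G.IsSpanningTree (insert f (T.erase e)) → e ≤ f

/-- The edge set of the unique cycle of `T ∪ {e}` (when it exists):
`e` together with those `f ∈ T` whose removal disconnects the ends of `e`. -/
noncomputable def cycleEdges (G : MGraph V E) (T : Finset E) (e : E) : Finset E :=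
  insert e (T.filter fun f => ¬ G.EndsConnected (T.erase f) e)

/-- `e ∉ T` is externally active: `T ∪ {e}` contains a cycle through `e` and
`e` is the minimal edge of that cycle. -/
def ExtActive [LinearOrder E] (G : MGraph V E) (T : Finset E) (e : E) : Prop :=
  e ∉ T ∧ G.EndsConnected T e ∧ ∀ f ∈ G.cycleEdges T e, e ≤ f

/-- The vertex set of the component `c` of `(V, A)`. -/
noncomputable def compVerts (G : MGraph V E) (A : Finset E) (c : G.Comp A) : Finset V :=
  Finset.univ.filter fun v => (Quotient.mk (G.compSetoid A) v) = c

/-- The total vertex weight of the component `c` of `(V, A)`. -/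
noncomputable def compWeight [AddCommMonoid S] (G : MGraph V E) (A : Finset E)
    (ω : V → S) (c : G.Comp A) : S :=
  ∑ v ∈ G.compVerts A c, ω v

/-- The V-polynomial, defined by its state sum. -/
noncomputable def Vpoly [AddCommMonoid S] [CommRing R] (G : MGraph V E)
    (ω : V → S) (γ : E → R) : MvPolynomial S R :=
  ∑ A : Finset E, (∏ c : G.Comp A, MvPolynomial.X (G.compWeight A ω c)) *
    MvPolynomial.C (∏ e ∈ A, γ e)

/-- The multivariate Tutte polynomial `Z_T(G; q, γ)` as a polynomial in `q`. -/
noncomputable def ZT [CommRing R] (G : MGraph V E) (γ : E → R) : Polynomial R :=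
  ∑ A : Finset E, Polynomial.X ^ (G.kA A) * Polynomial.C (∏ e ∈ A, γ e)

/-- Deletion of the edge `e`. -/
def del (G : MGraph V E) (e : E) : MGraph V {f : E // f ≠ e} := ⟨fun f => G.ends f.1⟩

/-- Contraction of the edge `e`: vertices are the components of `(V, {e})`. -/
noncomputable def contract (G : MGraph V E) (e : E) : MGraph (G.Comp {e}) {f : E // f ≠ e} :=
  ⟨fun f => (G.ends f.1).map (Quotient.mk (G.compSetoid {e}))⟩

/-- The forest `T` with the edges of `B` contracted: vertices are the components
of `(V, B)` and edges are `T \ B`. -/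
noncomputable def contractIn (G : MGraph V E) (T B : Finset E) :
    MGraph (G.Comp B) ↥(T \ B : Finset E) :=
  ⟨fun f => (G.ends f.1).map (Quotient.mk (G.compSetoid B))⟩

/-- The edges of `G` with both ends inside `P`. -/
noncomputable def edgesIn (G : MGraph V E) (P : Finset V) : Finset E :=
  Finset.univ.filter fun e => ∀ v ∈ G.ends e, v ∈ P

/-- The subgraph of `G` induced by the vertex set `P`. -/
noncomputable def induce (G : MGraph V E) (P : Finset V) : MGraph ↥P ↥(G.edgesIn P) :=
  ⟨fun e => (G.ends e.1).pmap (fun v hv => (⟨v, hv⟩ : ↥P))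
    (by have he := e.2; simp only [edgesIn, Finset.mem_filter] at he; exact he.2)⟩

/-- The block `B` induces a connected subgraph of `G`. -/
def BlockConnected (G : MGraph V E) (B : Finset V) : Prop :=
  ∀ u ∈ B, ∀ v ∈ B, Relation.EqvGen (G.adjRel (G.edgesIn B)) u v

/-- A connected partition of `V(G)`: every vertex lies in exactly one block,
blocks are nonempty, and each block induces a connected subgraph. -/
def IsConnectedPartition (G : MGraph V E) (P : Finset (Finset V)) : Prop :=
  (∀ B ∈ P, B.Nonempty) ∧ (∀ v : V, ∃! B, B ∈ P ∧ v ∈ B) ∧ ∀ B ∈ P, G.BlockConnected B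

/-- The partition `Π(A)` of `V(G)` into the components of `(V, A)`. -/
noncomputable def partitionOf (G : MGraph V E) (A : Finset E) : Finset (Finset V) :=
  Finset.univ.image fun c : G.Comp A => G.compVerts A c

/-- The internally inactive edges of the spanning tree `T`. -/
noncomputable def intInactives [LinearOrder E] (G : MGraph V E) (T : Finset E) : Finset E :=
  T.filter fun e => ¬ G.IntActive T e

/-- The internally active edges of the spanning tree `T`. -/
noncomputable def intActives [LinearOrder E] (G : MGraph V E) (T : Finset E) : Finset E :=
  T.filter fun e => G.IntActive T e

/-- The externally active edges w.r.t. the spanning tree / forest `T`. -/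
noncomputable def extActives [LinearOrder E] (G : MGraph V E) (T : Finset E) : Finset E :=
  Finset.univ.filter fun e => G.ExtActive T e

/-- Kronecker delta `δ(σ_i, σ_j)` for the two ends of the edge `e`. -/
noncomputable def edgeDelta (G : MGraph V E) {q : ℕ} (σ : V → Fin q) (e : E) : ℂ :=
  Sym2.lift ⟨fun u v => if σ u = σ v then 1 else 0, fun u v => by simp [eq_comm]⟩ (G.ends e)

/-- The Potts partition function with variable interactions `J` and
field vectors `M`. -/
noncomputable def Zext (G : MGraph V E) (q : ℕ) (β : ℂ) (J : E → ℂ) (M : V → Fin q → ℂ) : ℂ :=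
  ∑ σ : V → Fin q, Complex.exp (β * ((∑ e : E, J e * G.edgeDelta σ e) +
    ∑ v : V, ∑ α : Fin q, M v α * (if α = σ v then 1 else 0)))

/-- The Potts partition function with constant interaction `J` and constant
field `H` favouring the first spin. -/
noncomputable def ZconstField (G : MGraph V E) (q : ℕ) (β J H : ℂ) : ℂ :=
  ∑ σ : V → Fin q, Complex.exp (β * (J * (∑ e : E, G.edgeDelta σ e) +
    H * ∑ v : V, (if (σ v : ℕ) = 0 then (1 : ℂ) else 0)))

/-- The zero-field Potts partition function with constant interaction `J`. -/
noncomputable def Zzero (G : MGraph V E) (q : ℕ) (β J : ℂ) : ℂ :=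
  ∑ σ : V → Fin q, Complex.exp (β * J * ∑ e : E, G.edgeDelta σ e)

end MGraph

/-!
Group the subsets `A ⊆ E(G)` by the partition `Π(A)` of `V(G)` into the components of `(V, A)`;
it is a connected partition, and the monomial of `A` in `V(G)` depends only on `π = Π(A)`.
For fixed `π`, the sets `A` with `Π(A) = π` are exactly the disjoint unions, over the blocks `B`,
of edge sets of spanning connected subgraphs of `G[B]`, so their weights add up to
`∏_B Σ_{C spanning connected in G[B]} γ^C`. Each factor is `[q^1] Z_T(G[B])`, because
`k(C) = 1` says precisely that `C` connects `B`.
-/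

namespace MGraph

variable {V E : Type} (G : MGraph V E)

section Connectivity

lemma eq_of_eqvGen_adjRel {α : Type*} (f : V → α) {A : Finset E}
    (hf : ∀ e ∈ A, ∀ u v, G.ends e = s(u, v) → f u = f v) {u v : V}
    (h : Relation.EqvGen (G.adjRel A) u v) : f u = f v :=
  Setoid.eqvGen_le (s := Setoid.ker f) (fun _ _ ⟨e, he, hends⟩ => hf e he _ _ hends) h

lemma adjRel_mono {A A' : Finset E} (h : A ⊆ A') : G.adjRel A ≤ G.adjRel A' :=
  fun _ _ ⟨e, he, hends⟩ => ⟨e, h he, hends⟩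

lemma mk_eq_mk_iff {A : Finset E} {u v : V} :
    Quotient.mk (G.compSetoid A) u = Quotient.mk (G.compSetoid A) v ↔
      Relation.EqvGen (G.adjRel A) u v :=
  Quotient.eq

lemma kA_eq_one_iff [Nonempty V] {A : Finset E} :
    G.kA A = 1 ↔ ∀ u v, Relation.EqvGen (G.adjRel A) u v := by
  rw [kA, Comp, Nat.card_eq_one_iff_unique, and_iff_left ⟨Quotient.mk _ (Classical.arbitrary V)⟩,
    Quotient.subsingleton_iff, eq_top_iff, Setoid.le_def]
  simp only [Setoid.top_def, Pi.top_apply, Prop.top_eq_true, forall_const]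
  rfl

variable [Fintype V]

lemma mem_compVerts {A : Finset E} {c : G.Comp A} {v : V} :
    v ∈ G.compVerts A c ↔ Quotient.mk _ v = c := by
  simp [compVerts]

lemma eqvGen_of_mem_compVerts {A : Finset E} {c : G.Comp A} {u v : V}
    (hu : u ∈ G.compVerts A c) (hv : v ∈ G.compVerts A c) : Relation.EqvGen (G.adjRel A) u v :=
  G.mk_eq_mk_iff.mp ((G.mem_compVerts.mp hu).trans (G.mem_compVerts.mp hv).symm)

variable [Fintype E]

lemma mem_edgesIn {B : Finset V} {e : E} : e ∈ G.edgesIn B ↔ ∀ v ∈ G.ends e, v ∈ B := by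
  simp [edgesIn]

lemma mem_edgesIn_compVerts {A : Finset E} {c : G.Comp A} {e : E} (he : e ∈ A) {u v : V}
    (hends : G.ends e = s(u, v)) (hu : u ∈ G.compVerts A c) : e ∈ G.edgesIn (G.compVerts A c) := by
  rw [mem_edgesIn, hends]
  intro w hw
  rcases Sym2.mem_iff.mp hw with rfl | rfl
  · exact hu
  · exact G.mem_compVerts.mpr ((G.mk_eq_mk_iff.mpr (.rel _ _ ⟨e, he, hends⟩)).symm.trans
      (G.mem_compVerts.mp hu))

lemma mem_of_eqvGen_of_subset_edgesIn {A : Finset E} {B : Finset V} (hA : A ⊆ G.edgesIn B)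
    {u v : V} (h : Relation.EqvGen (G.adjRel A) u v) (hu : u ∈ B) : v ∈ B := by
  refine G.eq_of_eqvGen_adjRel (· ∈ B) (fun e he x y hends => ?_) h ▸ hu
  have hends_mem := G.mem_edgesIn.mp (hA he)
  rw [hends] at hends_mem
  exact propext ⟨fun _ => hends_mem y (Sym2.mem_mk_right x y),
    fun _ => hends_mem x (Sym2.mem_mk_left x y)⟩

lemma eqvGen_inter_edgesIn_compVerts {A : Finset E} {c : G.Comp A} {u v : V}
    (h : Relation.EqvGen (G.adjRel A) u v) (hu : u ∈ G.compVerts A c) :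
    Relation.EqvGen (G.adjRel (A ∩ G.edgesIn (G.compVerts A c))) u v := by
  induction h with
  | rel x y hxy =>
    obtain ⟨e, he, hends⟩ := hxy
    exact .rel _ _ ⟨e, mem_inter.mpr ⟨he, G.mem_edgesIn_compVerts he hends hu⟩, hends⟩
  | refl x => exact .refl x
  | symm x y hxy ih =>
    refine .symm _ _ (ih ?_)
    rw [mem_compVerts] at hu ⊢
    exact (G.mk_eq_mk_iff.mpr hxy).trans hu
  | trans x y z hxy _ ih₁ ih₂ =>
    refine .trans _ _ _ (ih₁ hu) (ih₂ ?_)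
    rw [mem_compVerts] at hu ⊢
    exact (G.mk_eq_mk_iff.mpr hxy).symm.trans hu

end Connectivity

section Partitions

variable [Fintype V]

lemma mem_partitionOf {A : Finset E} {B : Finset V} :
    B ∈ G.partitionOf A ↔ ∃ c, G.compVerts A c = B := by
  simp [partitionOf]

lemma compVerts_injective (A : Finset E) : Function.Injective (G.compVerts A) := by
  intro c c' h
  induction c using Quotient.ind with
  | _ u => exact G.mem_compVerts.mp (h ▸ G.mem_compVerts.mpr rfl)

lemma prod_partitionOf {M : Type*} [CommMonoid M] (A : Finset E) (f : Finset V → M) :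
    ∏ B ∈ G.partitionOf A, f B = ∏ c, f (G.compVerts A c) :=
  prod_image fun _ _ _ _ h => G.compVerts_injective A h

variable [Fintype E]

lemma IsConnectedPartition.eq_of_mem_of_mem {G : MGraph V E}
    {P : Finset (Finset V)} (hP : G.IsConnectedPartition P) {B B' : Finset V} (hB : B ∈ P)
    (hB' : B' ∈ P) {v : V} (hv : v ∈ B) (hv' : v ∈ B') : B = B' :=
  (hP.2.1 v).unique ⟨hB, hv⟩ ⟨hB', hv'⟩

lemma isConnectedPartition_partitionOf (A : Finset E) :
    G.IsConnectedPartition (G.partitionOf A) := by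
  refine ⟨?_, fun v => ⟨G.compVerts A (Quotient.mk _ v), ?_, ?_⟩, ?_⟩
  · intro B hB
    obtain ⟨c, rfl⟩ := G.mem_partitionOf.mp hB
    induction c using Quotient.ind with
    | _ u => exact ⟨u, G.mem_compVerts.mpr rfl⟩
  · exact ⟨G.mem_partitionOf.mpr ⟨_, rfl⟩, G.mem_compVerts.mpr rfl⟩
  · rintro _ ⟨hB, hv⟩
    obtain ⟨c, rfl⟩ := G.mem_partitionOf.mp hB
    rw [G.mem_compVerts.mp hv]
  · rintro _ hB u hu v hv
    obtain ⟨c, rfl⟩ := G.mem_partitionOf.mp hB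
    exact Relation.EqvGen.mono (G.adjRel_mono inter_subset_right) u v
      (G.eqvGen_inter_edgesIn_compVerts (G.eqvGen_of_mem_compVerts hu hv) hu)

lemma IsConnectedPartition.eq_of_mem_edgesIn {G : MGraph V E} {P : Finset (Finset V)}
    (hP : G.IsConnectedPartition P) {B B' : Finset V} (hB : B ∈ P) (hB' : B' ∈ P) {e : E}
    (he : e ∈ G.edgesIn B) (he' : e ∈ G.edgesIn B') : B = B' :=
  hP.eq_of_mem_of_mem hB hB' (G.mem_edgesIn.mp he _ (G.ends e).out_fst_mem)
    (G.mem_edgesIn.mp he' _ (G.ends e).out_fst_mem)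

lemma partitionOf_eq {P : Finset (Finset V)} (hP : G.IsConnectedPartition P) {A : Finset E}
    (hA : ∀ e ∈ A, ∃ B ∈ P, e ∈ G.edgesIn B)
    (hconn : ∀ B ∈ P, ∀ u ∈ B, ∀ v ∈ B, Relation.EqvGen (G.adjRel A) u v) :
    G.partitionOf A = P := by
  have hblock : ∀ B ∈ P, ∀ v ∈ B, G.compVerts A (Quotient.mk _ v) = B := by
    intro B hB v hv
    ext w
    refine G.mem_compVerts.trans (G.mk_eq_mk_iff.trans
      ⟨fun hwv => ?_, fun hw => .symm _ _ (hconn B hB v hv w hw)⟩)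
    suffices (w ∈ B) = (v ∈ B) from this ▸ hv
    refine G.eq_of_eqvGen_adjRel (· ∈ B) (fun e he x y hends => ?_) hwv
    obtain ⟨B', hB', heB'⟩ := hA e he
    have hx : x ∈ B' := G.mem_edgesIn.mp heB' x (hends ▸ Sym2.mem_mk_left x y)
    have hy : y ∈ B' := G.mem_edgesIn.mp heB' y (hends ▸ Sym2.mem_mk_right x y)
    exact propext ⟨fun h => hP.eq_of_mem_of_mem hB' hB hx h ▸ hy,
      fun h => hP.eq_of_mem_of_mem hB' hB hy h ▸ hx⟩
  ext X
  rw [mem_partitionOf]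
  constructor
  · rintro ⟨c, rfl⟩
    induction c using Quotient.ind with
    | _ v =>
      obtain ⟨B, ⟨hB, hv⟩, -⟩ := hP.2.1 v
      rwa [hblock B hB v hv]
  · intro hX
    obtain ⟨v, hv⟩ := hP.1 X hX
    exact ⟨_, hblock X hX v hv⟩

lemma exists_mem_partitionOf_mem_edgesIn {A : Finset E} {e : E} (he : e ∈ A) :
    ∃ B ∈ G.partitionOf A, e ∈ G.edgesIn B := by
  obtain ⟨⟨x, y⟩, hxy⟩ := Quot.exists_rep (G.ends e)
  exact ⟨_, G.mem_partitionOf.mpr ⟨Quotient.mk _ x, rfl⟩,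
    G.mem_edgesIn_compVerts he hxy.symm (G.mem_compVerts.mpr rfl)⟩

noncomputable def spanningConnectedSets (B : Finset V) : Finset (Finset E) :=
  (G.edgesIn B).powerset.filter fun C => ∀ u ∈ B, ∀ v ∈ B, Relation.EqvGen (G.adjRel C) u v

lemma mem_spanningConnectedSets {B : Finset V} {C : Finset E} :
    C ∈ G.spanningConnectedSets B ↔
      C ⊆ G.edgesIn B ∧ ∀ u ∈ B, ∀ v ∈ B, Relation.EqvGen (G.adjRel C) u v := by
  simp [spanningConnectedSets]

lemma inter_edgesIn_mem_spanningConnectedSets {A : Finset E} {B : Finset V}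
    (hB : B ∈ G.partitionOf A) : A ∩ G.edgesIn B ∈ G.spanningConnectedSets B := by
  obtain ⟨c, rfl⟩ := G.mem_partitionOf.mp hB
  exact G.mem_spanningConnectedSets.mpr ⟨inter_subset_right, fun u hu v hv =>
    G.eqvGen_inter_edgesIn_compVerts (G.eqvGen_of_mem_compVerts hu hv) hu⟩

theorem sum_prod_filter_partitionOf_eq {R : Type*} [CommSemiring R] (γ : E → R)
    {P : Finset (Finset V)} (hP : G.IsConnectedPartition P) :
    ∑ A ∈ univ.filter (G.partitionOf · = P), ∏ e ∈ A, γ e =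
      ∏ B ∈ P, ∑ C ∈ G.spanningConnectedSets B, ∏ e ∈ C, γ e := by
  rw [← prod_coe_sort, prod_univ_sum]
  have hdisj {p : P → Finset E} (hp : ∀ B, p B ⊆ G.edgesIn B) :
      (↑(univ : Finset P) : Set P).PairwiseDisjoint p := fun B _ B' _ hne =>
    disjoint_left.mpr fun _ he he' =>
      hne (Subtype.ext (hP.eq_of_mem_edgesIn B.2 B'.2 (hp B he) (hp B' he')))
  have hunion : ∀ A ∈ univ.filter (G.partitionOf · = P),
      univ.biUnion (fun B : P => A ∩ G.edgesIn B) = A := by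
    intro A hA
    refine Subset.antisymm (biUnion_subset.mpr fun _ _ => inter_subset_left) fun e he => ?_
    obtain ⟨B, hB, heB⟩ := G.exists_mem_partitionOf_mem_edgesIn he
    rw [(mem_filter.mp hA).2] at hB
    exact mem_biUnion.mpr ⟨⟨B, hB⟩, mem_univ _, mem_inter.mpr ⟨he, heB⟩⟩
  refine sum_nbij' (fun A B => A ∩ G.edgesIn B) (fun p => univ.biUnion p) ?_ ?_ hunion ?_ ?_
  · intro A hA
    exact Fintype.mem_piFinset.mpr fun B =>
      G.inter_edgesIn_mem_spanningConnectedSets ((mem_filter.mp hA).2 ▸ B.2)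
  · intro p hp
    simp only [Fintype.mem_piFinset, mem_spanningConnectedSets] at hp
    refine mem_filter.mpr ⟨mem_univ _, G.partitionOf_eq hP (fun e he => ?_) fun B hB => ?_⟩
    · obtain ⟨B, -, heB⟩ := mem_biUnion.mp he
      exact ⟨B, B.2, (hp B).1 heB⟩
    · exact fun u hu v hv => Relation.EqvGen.mono
        (G.adjRel_mono (subset_biUnion_of_mem p (mem_univ ⟨B, hB⟩))) u v ((hp ⟨B, hB⟩).2 u hu v hv)
  · intro p hp
    simp only [Fintype.mem_piFinset, mem_spanningConnectedSets] at hp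
    funext B
    ext e
    rw [mem_inter, mem_biUnion]
    constructor
    · rintro ⟨⟨B', -, heB'⟩, he⟩
      rwa [Subtype.ext (hP.eq_of_mem_edgesIn B'.2 B.2 ((hp B').1 heB') he)] at heB'
    · exact fun he => ⟨⟨B, mem_univ _, he⟩, (hp B).1 he⟩
  · intro A hA
    rw [← prod_biUnion (hdisj fun _ => inter_subset_right), hunion A hA]

end Partitions

lemma coeff_one_ZT [Fintype E] {R : Type} [CommRing R] (γ : E → R) :
    (G.ZT γ).coeff 1 = ∑ A ∈ univ.filter (G.kA · = 1), ∏ e ∈ A, γ e := by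
  rw [ZT, Polynomial.finsetSum_coeff, sum_filter]
  refine sum_congr rfl fun A _ => ?_
  rw [mul_comm, Polynomial.coeff_C_mul_X_pow]
  exact if_congr eq_comm rfl rfl

section InducedSubgraph

variable [Fintype V] [Fintype E] {B : Finset V}

lemma induce_ends_eq_iff {e : G.edgesIn B} {u v : B} :
    (G.induce B).ends e = s(u, v) ↔ G.ends e = s(u.1, v.1) := by
  have hval : ((G.induce B).ends e).map Subtype.val = G.ends e :=
    Sym2.pmap_subtype_map_subtypeVal _ _
  rw [← hval, ← Sym2.map_mk, (Sym2.map.injective Subtype.val_injective).eq_iff]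

lemma induce_adjRel_iff {A' : Finset (G.edgesIn B)} {u v : B} :
    (G.induce B).adjRel A' u v ↔ G.adjRel (A'.map (Function.Embedding.subtype _)) u v := by
  simp [adjRel, G.induce_ends_eq_iff]

lemma eqvGen_induce_iff {A' : Finset (G.edgesIn B)} {u v : B} :
    Relation.EqvGen ((G.induce B).adjRel A') u v ↔
      Relation.EqvGen (G.adjRel (A'.map (Function.Embedding.subtype _))) u v := by
  constructor
  · intro h
    induction h with
    | rel x y hxy => exact .rel _ _ (G.induce_adjRel_iff.mp hxy)
    | refl x => exact .refl _
    | symm x y _ ih => exact .symm _ _ ih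
    | trans x y z _ _ ih₁ ih₂ => exact .trans _ _ _ ih₁ ih₂
  · suffices ∀ x y, Relation.EqvGen (G.adjRel (A'.map (Function.Embedding.subtype _))) x y →
        ∀ (hx : x ∈ B) (hy : y ∈ B), Relation.EqvGen ((G.induce B).adjRel A') ⟨x, hx⟩ ⟨y, hy⟩ from
      fun h => this u v h u.2 v.2
    intro x y h
    induction h with
    | rel x y hxy => exact fun hx hy => .rel _ _ (G.induce_adjRel_iff.mpr hxy)
    | refl x => exact fun _ _ => .refl _
    | symm x y _ ih => exact fun hx hy => .symm _ _ (ih hy hx)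
    | trans x y z hxy _ ih₁ ih₂ =>
      intro hx hz
      have hy : y ∈ B :=
        G.mem_of_eqvGen_of_subset_edgesIn (fun e he => map_subtype_subset A' he) hxy hx
      exact .trans _ _ _ (ih₁ hx hy) (ih₂ hy hz)

lemma kA_induce_eq_one_iff (hB : B.Nonempty) {A' : Finset (G.edgesIn B)} :
    (G.induce B).kA A' = 1 ↔ ∀ u ∈ B, ∀ v ∈ B,
      Relation.EqvGen (G.adjRel (A'.map (Function.Embedding.subtype _))) u v := by
  have : Nonempty B := hB.to_subtype
  simp only [kA_eq_one_iff, eqvGen_induce_iff, Subtype.forall]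

lemma coeff_one_ZT_induce {R : Type} [CommRing R] (γ : E → R) (hB : B.Nonempty) :
    ((G.induce B).ZT (fun f => γ f.1)).coeff 1 =
      ∑ C ∈ G.spanningConnectedSets B, ∏ e ∈ C, γ e := by
  rw [coeff_one_ZT]
  refine sum_nbij' (·.map (Function.Embedding.subtype _)) (·.subtype (· ∈ G.edgesIn B))
    ?_ ?_ ?_ ?_ ?_
  · intro A' hA'
    rw [mem_filter, G.kA_induce_eq_one_iff hB] at hA'
    exact G.mem_spanningConnectedSets.mpr ⟨fun e he => map_subtype_subset A' he, hA'.2⟩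
  · intro C hC
    obtain ⟨hsub, hconn⟩ := G.mem_spanningConnectedSets.mp hC
    refine mem_filter.mpr ⟨mem_univ _, (G.kA_induce_eq_one_iff hB).mpr ?_⟩
    rwa [subtype_map_of_mem hsub]
  · intro A' _
    ext e
    simp
  · intro C hC
    exact subtype_map_of_mem (G.mem_spanningConnectedSets.mp hC).1
  · intro A' _
    rw [prod_map]
    rfl

end InducedSubgraph

end MGraph

/-- Connected-partition expansion of the V-polynomial:
`V(G) = Σ_{π∈P(G)} x(π) ∏_{H∈C(π)} [q^1] Z_T(H;q,γ)`. -/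
theorem Vpoly_connected_partition_expansion {V E S R : Type} [Fintype V] [Fintype E]
    [AddCommMonoid S] [CommRing R] (G : MGraph V E) (ω : V → S) (γ : E → R) :
    G.Vpoly ω γ =
      ∑ P ∈ Finset.univ.filter (fun P => G.IsConnectedPartition P),
        (∏ B ∈ P, MvPolynomial.X (∑ v ∈ B, ω v)) *
        MvPolynomial.C (∏ B ∈ P, ((G.induce B).ZT (fun f => γ f.1)).coeff 1) := by
  rw [MGraph.Vpoly, ← sum_fiberwise_of_maps_to (g := G.partitionOf)
    fun A _ => mem_filter.mpr ⟨mem_univ _, G.isConnectedPartition_partitionOf A⟩]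
  refine sum_congr rfl fun P hP => ?_
  replace hP := (mem_filter.mp hP).2
  have hmonomial : ∀ A ∈ univ.filter (G.partitionOf · = P),
      ∏ c, (MvPolynomial.X (G.compWeight A ω c) : MvPolynomial S R) =
        ∏ B ∈ P, MvPolynomial.X (∑ v ∈ B, ω v) := by
    intro A hA
    rw [← (mem_filter.mp hA).2, G.prod_partitionOf]
    rfl
  rw [sum_congr rfl fun A hA => by rw [hmonomial A hA], ← mul_sum, ← map_sum,
    G.sum_prod_filter_partitionOf_eq γ hP,
    prod_congr rfl fun B hB => G.coeff_one_ZT_induce γ (hP.1 B hB)]
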